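/- Let A, B, C be real normed vector spaces and v ∈ A ⊗ B ⊗ C (algebraic tensor product). Then the minimal subspace U_A(v) can be computed by first contracting to the block A ⊗ B and then contracting within the block using only continuous functionals: U_A(v) = span{(id_A ⊗ ψ)(w) : w ∈ U_{AB}(v), ψ ∈ B^* continuous}, where (id_A ⊗ ψ) : A ⊗ B → A is the linear map sending x ⊗ y to ψ(y) • x and U_A(v), U_{AB}(v) are the minimal subspaces defined with algebraic dual functionals. -/

import Mathlib

open scoped TensorProduct

section
variable (𝕜 : Type*) [Field 𝕜]

/-- The contraction `id_V ⊗ φ : V ⊗ W → V`, sending `x ⊗ y` to `φ(y) • x`. -/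
noncomputable def rContract (V W : Type*) [AddCommGroup V] [Module 𝕜 V]
    [AddCommGroup W] [Module 𝕜 W] (φ : W →ₗ[𝕜] 𝕜) : V ⊗[𝕜] W →ₗ[𝕜] V :=
  (TensorProduct.rid 𝕜 V).toLinearMap ∘ₗ TensorProduct.map LinearMap.id φ

/-- The contraction `ψ ⊗ id_W : V ⊗ W → W`, sending `x ⊗ y` to `ψ(x) • y`. -/
noncomputable def lContract (V W : Type*) [AddCommGroup V] [Module 𝕜 V]
    [AddCommGroup W] [Module 𝕜 W] (ψ : V →ₗ[𝕜] 𝕜) : V ⊗[𝕜] W →ₗ[𝕜] W :=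
  (TensorProduct.lid 𝕜 W).toLinearMap ∘ₗ TensorProduct.map ψ LinearMap.id

/-- The left minimal subspace `U_V(v)` of `v ∈ V ⊗ W`: the span of all contractions
`(id_V ⊗ φ)(v)` with `φ` in the algebraic dual of `W`. -/
noncomputable def leftMin (V W : Type*) [AddCommGroup V] [Module 𝕜 V]
    [AddCommGroup W] [Module 𝕜 W] (v : V ⊗[𝕜] W) : Submodule 𝕜 V :=
  Submodule.span 𝕜 {x | ∃ φ : W →ₗ[𝕜] 𝕜, rContract 𝕜 V W φ v = x}

/-- The right minimal subspace `U_W(v)` of `v ∈ V ⊗ W`: the span of all contractions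
`(ψ ⊗ id_W)(v)` with `ψ` in the algebraic dual of `V`. -/
noncomputable def rightMin (V W : Type*) [AddCommGroup V] [Module 𝕜 V]
    [AddCommGroup W] [Module 𝕜 W] (v : V ⊗[𝕜] W) : Submodule 𝕜 W :=
  Submodule.span 𝕜 {y | ∃ ψ : V →ₗ[𝕜] 𝕜, lContract 𝕜 V W ψ v = y}

end

section
variable (𝕜 A B C : Type*) [Field 𝕜] [AddCommGroup A] [Module 𝕜 A]
  [AddCommGroup B] [Module 𝕜 B] [AddCommGroup C] [Module 𝕜 C]

/-- The minimal subspace `U_{AB}(v) ≤ A ⊗ B` of `v ∈ (A ⊗ B) ⊗ C`. -/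
noncomputable def minAB (v : (A ⊗[𝕜] B) ⊗[𝕜] C) : Submodule 𝕜 (A ⊗[𝕜] B) :=
  leftMin 𝕜 (A ⊗[𝕜] B) C v

/-- The minimal subspace `U_A(v) ≤ A` of `v ∈ (A ⊗ B) ⊗ C`, obtained by contracting
`B ⊗ C` via the associativity isomorphism. -/
noncomputable def minA (v : (A ⊗[𝕜] B) ⊗[𝕜] C) : Submodule 𝕜 A :=
  leftMin 𝕜 A (B ⊗[𝕜] C) (TensorProduct.assoc 𝕜 A B C v)

/-- The minimal subspace `U_B(v) ≤ B` of `v ∈ (A ⊗ B) ⊗ C`, obtained by contracting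
the factors `A` and `C`. -/
noncomputable def minB (v : (A ⊗[𝕜] B) ⊗[𝕜] C) : Submodule 𝕜 B :=
  Submodule.span 𝕜
    {y | ∃ (ψ : A →ₗ[𝕜] 𝕜) (φ : C →ₗ[𝕜] 𝕜),
      lContract 𝕜 A B ψ (rContract 𝕜 (A ⊗[𝕜] B) C φ v) = y}

end

/-! Contracting `v` by `χ ∈ (B ⊗ C)^*`: a tensor lies in its minimal subspace tensored with the
other factor, so `v = ∑ tⱼ ⊗ zⱼ` with `tⱼ ∈ U_{AB}(v)`, and the contraction equals
`∑ (id_A ⊗ χ(· ⊗ zⱼ))(tⱼ)`. Conversely, contracting by `φ ∈ C^*` and then by `ψ ∈ B^*` is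
contracting by `φ ∘ (ψ ⊗ id_C)`. Continuity of `ψ` costs nothing: a contraction of a fixed tensor
only sees `ψ` on a finite-dimensional subspace, where it is continuous and extends by Hahn–Banach.
-/

open TensorProduct

section Contraction

variable {𝕜 V W X : Type*} [Field 𝕜] [AddCommGroup V] [Module 𝕜 V] [AddCommGroup W] [Module 𝕜 W]
  [AddCommGroup X] [Module 𝕜 X]

@[simp]
lemma rContract_tmul (φ : W →ₗ[𝕜] 𝕜) (x : V) (y : W) :
    rContract 𝕜 V W φ (x ⊗ₜ y) = φ y • x := by
  simp [rContract]

lemma rContract_comp_lTensor (φ : W →ₗ[𝕜] 𝕜) (f : X →ₗ[𝕜] W) :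
    rContract 𝕜 V W φ ∘ₗ f.lTensor V = rContract 𝕜 V X (φ ∘ₗ f) := by
  ext x y
  simp

lemma rContract_basis_coord {ι : Type*} (b : Module.Basis ι 𝕜 W) (c : ι →₀ V) (j : ι) :
    rContract 𝕜 V W (b.coord j) (c.sum fun i x ↦ x ⊗ₜ b i) = c j := by
  classical
  simp [Finsupp.sum, Finsupp.single_apply, eq_comm]

theorem mem_range_rTensor_leftMin (v : V ⊗[𝕜] W) :
    v ∈ LinearMap.range ((leftMin 𝕜 V W v).subtype.rTensor W) := by
  set b := Module.Basis.ofVectorSpace 𝕜 W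
  obtain ⟨c, hc⟩ := eq_repr_basis_right b v
  have hc_mem (i) : c i ∈ leftMin 𝕜 V W v :=
    Submodule.subset_span ⟨b.coord i, by rw [← hc, rContract_basis_coord]⟩
  have hsum : (c.sum fun i x ↦ x ⊗ₜ b i) ∈ LinearMap.range ((leftMin 𝕜 V W v).subtype.rTensor W) :=
    Submodule.finsuppSum_mem _ _ _ _ fun i _ ↦ ⟨⟨c i, hc_mem i⟩ ⊗ₜ b i, rfl⟩
  rwa [hc] at hsum

end Contraction

section Continuous

variable {𝕜 V W : Type*} [RCLike 𝕜] [AddCommGroup V] [Module 𝕜 V]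
  [NormedAddCommGroup W] [NormedSpace 𝕜 W]

theorem exists_continuous_rContract_eq (φ : W →ₗ[𝕜] 𝕜) (t : V ⊗[𝕜] W) :
    ∃ ψ : W →L[𝕜] 𝕜, rContract 𝕜 V W ψ t = rContract 𝕜 V W φ t := by
  obtain ⟨P, _, ht⟩ :=
    exists_finite_submodule_right_of_setFinite {t} (Set.finite_singleton t)
  obtain ⟨u, rfl⟩ := ht rfl
  obtain ⟨ψ, hψ, -⟩ := exists_extension_norm_eq P (φ.domRestrict P).toContinuousLinearMap
  have hψφ : (ψ : W →ₗ[𝕜] 𝕜) ∘ₗ P.subtype = φ ∘ₗ P.subtype := LinearMap.ext hψ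
  refine ⟨ψ, ?_⟩
  rw [← LinearMap.comp_apply, ← LinearMap.comp_apply, rContract_comp_lTensor,
    rContract_comp_lTensor, hψφ]

end Continuous

section Hierarchy

variable {𝕜 A B C : Type*} [Field 𝕜] [AddCommGroup A] [Module 𝕜 A]
  [AddCommGroup B] [Module 𝕜 B] [AddCommGroup C] [Module 𝕜 C]

lemma rContract_rContract (ψ : B →ₗ[𝕜] 𝕜) (φ : C →ₗ[𝕜] 𝕜) (t : (A ⊗[𝕜] B) ⊗[𝕜] C) :
    rContract 𝕜 A B ψ (rContract 𝕜 (A ⊗[𝕜] B) C φ t) =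
      rContract 𝕜 A (B ⊗[𝕜] C) (φ ∘ₗ lContract 𝕜 B C ψ) (TensorProduct.assoc 𝕜 A B C t) := by
  suffices rContract 𝕜 A B ψ ∘ₗ rContract 𝕜 (A ⊗[𝕜] B) C φ =
      rContract 𝕜 A (B ⊗[𝕜] C) (φ ∘ₗ lContract 𝕜 B C ψ) ∘ₗ
        (TensorProduct.assoc 𝕜 A B C).toLinearMap from
    LinearMap.congr_fun this t
  refine ext_threefold fun a b c ↦ ?_
  simp [lContract, smul_smul, mul_comm]

lemma rContract_assoc_tmul (χ : B ⊗[𝕜] C →ₗ[𝕜] 𝕜) (t : A ⊗[𝕜] B) (z : C) :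
    rContract 𝕜 A (B ⊗[𝕜] C) χ (TensorProduct.assoc 𝕜 A B C (t ⊗ₜ z)) =
      rContract 𝕜 A B (χ ∘ₗ (TensorProduct.mk 𝕜 B C).flip z) t := by
  induction t using TensorProduct.induction_on with
  | zero => simp
  | tmul a b => simp
  | add t t' ht ht' => simp only [add_tmul, map_add, ht, ht']

lemma rContract_assoc_rTensor_mem_span (χ : B ⊗[𝕜] C →ₗ[𝕜] 𝕜) (U : Submodule 𝕜 (A ⊗[𝕜] B))
    (u : U ⊗[𝕜] C) :
    rContract 𝕜 A (B ⊗[𝕜] C) χ (TensorProduct.assoc 𝕜 A B C (U.subtype.rTensor C u)) ∈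
      Submodule.span 𝕜 {x | ∃ w ∈ U, ∃ ψ : B →ₗ[𝕜] 𝕜, rContract 𝕜 A B ψ w = x} := by
  induction u using TensorProduct.induction_on with
  | zero => simp
  | tmul t z =>
    rw [LinearMap.rTensor_tmul, rContract_assoc_tmul]
    exact Submodule.subset_span ⟨t, t.2, _, rfl⟩
  | add u u' hu hu' => simpa only [map_add] using add_mem hu hu'

theorem minA_eq_span_rContract_minAB (v : (A ⊗[𝕜] B) ⊗[𝕜] C) :
    minA 𝕜 A B C v =
      Submodule.span 𝕜
        {x | ∃ w ∈ minAB 𝕜 A B C v, ∃ ψ : B →ₗ[𝕜] 𝕜, rContract 𝕜 A B ψ w = x} := by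
  apply le_antisymm
  · refine Submodule.span_le.2 ?_
    rintro _ ⟨χ, rfl⟩
    obtain ⟨u, hu⟩ : v ∈ LinearMap.range ((minAB 𝕜 A B C v).subtype.rTensor C) :=
      mem_range_rTensor_leftMin v
    have hv := rContract_assoc_rTensor_mem_span χ _ u
    rwa [hu] at hv
  · refine Submodule.span_le.2 ?_
    rintro _ ⟨w, hw, ψ, rfl⟩
    suffices minAB 𝕜 A B C v ≤ (minA 𝕜 A B C v).comap (rContract 𝕜 A B ψ) from this hw
    refine Submodule.span_le.2 ?_
    rintro _ ⟨φ, rfl⟩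
    exact Submodule.subset_span ⟨_, (rContract_rContract ψ φ v).symm⟩

end Hierarchy

section
variable {A B C : Type*} [NormedAddCommGroup A] [NormedSpace ℝ A]
  [NormedAddCommGroup B] [NormedSpace ℝ B] [NormedAddCommGroup C] [NormedSpace ℝ C]

/-- **Hierarchical computation of minimal subspaces with continuous functionals.**
For normed spaces `A`, `B`, `C` and `v ∈ A ⊗ B ⊗ C` (algebraic tensor product), the
minimal subspace `U_A(v)` (defined with algebraic duals) equals the span of the
contractions `(id_A ⊗ ψ)(w)` of elements `w ∈ U_{AB}(v)` by *continuous* functionals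
`ψ ∈ B^*`. -/
theorem minA_eq_span_continuous_contractions_of_minAB (v : (A ⊗[ℝ] B) ⊗[ℝ] C) :
    minA ℝ A B C v =
      Submodule.span ℝ
        {x | ∃ w ∈ minAB ℝ A B C v, ∃ ψ : B →L[ℝ] ℝ,
          rContract ℝ A B (ψ : B →ₗ[ℝ] ℝ) w = x} := by
  rw [minA_eq_span_rContract_minAB]
  congr 1
  ext x
  constructor
  · rintro ⟨w, hw, φ, rfl⟩
    obtain ⟨ψ, hψ⟩ := exists_continuous_rContract_eq φ w
    exact ⟨w, hw, ψ, hψ⟩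
  · rintro ⟨w, hw, ψ, rfl⟩
    exact ⟨w, hw, ψ, rfl⟩

end
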